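/- Let ρ be a K×K real matrix with nonnegative entries, ‖ρ‖ < 1 (Euclidean operator norm), and set C = (1 + ‖ρ‖)/(1 - ‖ρ‖) and φ(θ)_ℓ = Σ_j ρ_{ℓ,j}(e^{θ_j} - 1). Define g₁(θ) = θ + φ(θ) and g_n(θ) = θ + φ(g_{n-1}(θ)) for n ≥ 2. If ‖θ‖₂ ≤ (1+C)⁻¹ · log(C/(‖ρ‖(1+C))), then ‖g_n(θ)‖₂ ≤ ‖θ‖₂ · (1 + C) for all n ≥ 1. -/

import Mathlib

/-!
Since `φ = ρ ∘ (e^· - 1)` coordinatewise and `|e^t - 1| ≤ e^{|t|} |t|`, we get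
`‖φ x‖ ≤ ‖ρ‖ e^{‖x‖} ‖x‖`. With `R = ‖θ‖ (1 + C)`, the hypothesis on `‖θ‖` is exactly
`‖ρ‖ e^R (1 + C) ≤ C`, which makes `x ↦ θ + φ x` map the closed ball of radius `R` into itself.
Since `θ` lies in that ball, so do all the iterates.
-/

open Matrix Metric Set

lemma Real.abs_exp_sub_one_le_exp_abs_mul_abs (t : ℝ) : |exp t - 1| ≤ exp |t| * |t| := by
  rcases le_or_gt 0 t with ht | ht
  · rw [abs_of_nonneg ht, abs_of_nonneg (by linarith [one_le_exp ht])]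
    -- `exp t - 1 ≤ t * exp t` is `1 - t ≤ exp (-t)` multiplied by `exp t`
    have h := mul_le_mul_of_nonneg_right (one_sub_le_exp_neg t) (exp_pos t).le
    rw [← exp_add, neg_add_cancel, exp_zero] at h
    linarith
  · rw [abs_of_neg ht, abs_of_nonpos (by linarith [exp_lt_one_iff.2 ht])]
    nlinarith [add_one_le_exp t, one_le_exp (neg_nonneg.2 ht.le)]

lemma EuclideanSpace.norm_le_norm_of_forall_norm_apply_le {𝕜 ι : Type*} [RCLike 𝕜] [Fintype ι]
    {v w : EuclideanSpace 𝕜 ι} (h : ∀ i, ‖v i‖ ≤ ‖w i‖) : ‖v‖ ≤ ‖w‖ := by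
  rw [EuclideanSpace.norm_eq, EuclideanSpace.norm_eq]
  gcongr with i
  exact h i

section ExpSubOne

variable {ι : Type*} [Fintype ι]

noncomputable def expSubOne (x : EuclideanSpace ℝ ι) : EuclideanSpace ℝ ι :=
  WithLp.toLp 2 fun j => Real.exp (x j) - 1

lemma norm_expSubOne_le (x : EuclideanSpace ℝ ι) :
    ‖expSubOne x‖ ≤ Real.exp ‖x‖ * ‖x‖ := by
  rw [← Real.norm_of_nonneg (Real.exp_pos ‖x‖).le, ← norm_smul]
  refine EuclideanSpace.norm_le_norm_of_forall_norm_apply_le fun j => ?_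
  rw [PiLp.smul_apply, norm_smul, Real.norm_eq_abs, Real.norm_eq_abs, Real.norm_eq_abs,
    abs_of_pos (Real.exp_pos _)]
  calc |Real.exp (x j) - 1| ≤ Real.exp |x j| * |x j| := Real.abs_exp_sub_one_le_exp_abs_mul_abs _
    _ ≤ Real.exp ‖x‖ * |x j| := by
        gcongr
        exact PiLp.norm_apply_le x j

lemma norm_toEuclideanCLM_expSubOne_le [DecidableEq ι] (ρ : Matrix ι ι ℝ)
    (x : EuclideanSpace ℝ ι) :
    ‖toEuclideanCLM (𝕜 := ℝ) ρ (expSubOne x)‖ ≤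
      ‖toEuclideanCLM (𝕜 := ℝ) ρ‖ * Real.exp ‖x‖ * ‖x‖ := by
  rw [mul_assoc]
  exact (ContinuousLinearMap.le_opNorm _ _).trans (by gcongr; exact norm_expSubOne_le x)

end ExpSubOne

lemma mapsTo_add_closedBall {E : Type*} [SeminormedAddCommGroup E] {φ : E → E} {r R : ℝ}
    (hr : 0 ≤ r) (hφ : ∀ x, ‖φ x‖ ≤ r * Real.exp ‖x‖ * ‖x‖) {θ : E}
    (hR : ‖θ‖ + r * Real.exp R * R ≤ R) :
    MapsTo (fun x => θ + φ x) (closedBall 0 R) (closedBall 0 R) := by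
  intro x hx
  rw [mem_closedBall_zero_iff] at hx ⊢
  calc ‖θ + φ x‖ ≤ ‖θ‖ + r * Real.exp ‖x‖ * ‖x‖ := (norm_add_le _ _).trans (by gcongr; exact hφ x)
    _ ≤ ‖θ‖ + r * Real.exp R * R := by gcongr
    _ ≤ R := hR

lemma mul_exp_mul_le_of_le_inv_mul_log {r C t : ℝ} (hr : 0 ≤ r) (hC : 0 < C)
    (ht : t ≤ (1 + C)⁻¹ * Real.log (C / (r * (1 + C)))) :
    r * Real.exp (t * (1 + C)) * (1 + C) ≤ C := by
  rcases hr.eq_or_lt with rfl | hr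
  · simpa using hC.le
  have h1C : 0 < 1 + C := by linarith
  have hexp : Real.exp (t * (1 + C)) ≤ C / (r * (1 + C)) := by
    rw [← Real.exp_log (by positivity : 0 < C / (r * (1 + C))), Real.exp_le_exp,
      ← le_div_iff₀ h1C, div_eq_inv_mul]
    exact ht
  calc r * Real.exp (t * (1 + C)) * (1 + C) ≤ r * (C / (r * (1 + C))) * (1 + C) := by gcongr
    _ = C := by field_simp

theorem iterates_bounded_general (K : ℕ) (ρ : Matrix (Fin K) (Fin K) ℝ)
    (hρ : ‖Matrix.toEuclideanCLM (𝕜 := ℝ) ρ‖ < 1)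
    (C : ℝ)
    (hC : C = (1 + ‖Matrix.toEuclideanCLM (𝕜 := ℝ) ρ‖) /
              (1 - ‖Matrix.toEuclideanCLM (𝕜 := ℝ) ρ‖))
    (φ : EuclideanSpace ℝ (Fin K) → EuclideanSpace ℝ (Fin K))
    (hφ : ∀ θ ℓ, φ θ ℓ = ∑ j, ρ ℓ j * (Real.exp (θ j) - 1))
    (θ : EuclideanSpace ℝ (Fin K))
    (g : ℕ → EuclideanSpace ℝ (Fin K))
    (hg1 : g 1 = θ + φ θ)
    (hgrec : ∀ n, 1 ≤ n → g (n + 1) = θ + φ (g n))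
    (hθ : ‖θ‖ ≤ (1 + C)⁻¹ *
      Real.log (C / (‖Matrix.toEuclideanCLM (𝕜 := ℝ) ρ‖ * (1 + C)))) :
    ∀ n, 1 ≤ n → ‖g n‖ ≤ ‖θ‖ * (1 + C) := by
  set r := ‖Matrix.toEuclideanCLM (𝕜 := ℝ) ρ‖
  have hr : 0 ≤ r := norm_nonneg _
  have hCpos : 0 < C := hC ▸ div_pos (by linarith) (by linarith)
  have hφρ : ∀ x, φ x = toEuclideanCLM (𝕜 := ℝ) ρ (expSubOne x) := fun x => by
    ext ℓ
    simp [hφ, expSubOne, mulVec, dotProduct]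
  have hball : MapsTo (fun x => θ + φ x) (closedBall 0 (‖θ‖ * (1 + C)))
      (closedBall 0 (‖θ‖ * (1 + C))) := by
    refine mapsTo_add_closedBall hr (fun x => hφρ x ▸ norm_toEuclideanCLM_expSubOne_le ρ x) ?_
    have := mul_le_mul_of_nonneg_left (mul_exp_mul_le_of_le_inv_mul_log hr hCpos hθ)
      (norm_nonneg θ)
    linear_combination this
  have hθball : θ ∈ closedBall 0 (‖θ‖ * (1 + C)) := by
    rw [mem_closedBall_zero_iff]
    exact le_mul_of_one_le_right (norm_nonneg θ) (by linarith)
  intro n hn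
  rw [← mem_closedBall_zero_iff]
  induction n, hn using Nat.le_induction with
  | base => exact hg1 ▸ hball hθball
  | succ n hn ih => exact hgrec n hn ▸ hball ih

/-- Key induction: if `‖θ‖₂ ≤ (1+C)⁻¹ log(C/(‖ρ‖(1+C)))` with
`C = (1+‖ρ‖)/(1-‖ρ‖)`, then the iterates `g_n(θ) = θ + φ(g_{n-1}(θ))`,
`g₁(θ) = θ + φ(θ)`, where `φ(θ)_ℓ = Σ_j ρ_{ℓ,j}(e^{θ_j} - 1)`, satisfy
`‖g_n(θ)‖₂ ≤ ‖θ‖₂ (1 + C)` for all `n ≥ 1`. -/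
theorem iterates_bounded (K : ℕ) (ρ : Matrix (Fin K) (Fin K) ℝ)
    (hnn : ∀ i j, 0 ≤ ρ i j)
    (hρ : ‖Matrix.toEuclideanCLM (𝕜 := ℝ) ρ‖ < 1)
    (C : ℝ)
    (hC : C = (1 + ‖Matrix.toEuclideanCLM (𝕜 := ℝ) ρ‖) /
              (1 - ‖Matrix.toEuclideanCLM (𝕜 := ℝ) ρ‖))
    (φ : EuclideanSpace ℝ (Fin K) → EuclideanSpace ℝ (Fin K))
    (hφ : ∀ θ ℓ, φ θ ℓ = ∑ j, ρ ℓ j * (Real.exp (θ j) - 1))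
    (θ : EuclideanSpace ℝ (Fin K))
    (g : ℕ → EuclideanSpace ℝ (Fin K))
    (hg1 : g 1 = θ + φ θ)
    (hgrec : ∀ n, 1 ≤ n → g (n + 1) = θ + φ (g n))
    (hθ : ‖θ‖ ≤ (1 + C)⁻¹ *
      Real.log (C / (‖Matrix.toEuclideanCLM (𝕜 := ℝ) ρ‖ * (1 + C)))) :
    ∀ n, 1 ≤ n → ‖g n‖ ≤ ‖θ‖ * (1 + C) :=
  iterates_bounded_general K ρ hρ C hC φ hφ θ g hg1 hgrec hθ
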